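/- Let n ≥ 1, let K be a local unitary on n qubits and H a 2^n-dimensional complex matrix with K * H * Kᴴ = -H. Then there exist a local unitary K̄ and a diagonal local unitary K_z (a local z-rotation, i.e. a local unitary that is also a diagonal matrix) such that K = K̄ * K_z * K̄ᴴ; consequently H̄ := K̄ᴴ * H * K̄ satisfies K_z * H̄ * K_zᴴ = -H̄. Thus every Hamiltonian that is type-I locally invertible lies on the local unitary orbit of a Hamiltonian that is sign-inverted by individual local z-rotations, so inversion by local z-rotations is the normal form of the problem. -/

import Mathlib

open Matrix

/-- A `2^n`-dimensional matrix (indexed by configurations `Fin n → Fin 2`) is a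
local unitary if it is the `n`-fold Kronecker product of unitary 2×2 matrices. -/
def IsLocalUnitary {n : ℕ} (K : Matrix (Fin n → Fin 2) (Fin n → Fin 2) ℂ) : Prop :=
  ∃ u : Fin n → Matrix (Fin 2) (Fin 2) ℂ,
    (∀ ℓ, (u ℓ)ᴴ * u ℓ = 1) ∧ ∀ f g, K f g = ∏ ℓ, u ℓ (f ℓ) (g ℓ)

/-- The Pauli-z operator acting on qubit `ℓ`. -/
def Zop {n : ℕ} (ℓ : Fin n) : Matrix (Fin n → Fin 2) (Fin n → Fin 2) ℂ :=
  fun f g => if f = g then (-1 : ℂ) ^ ((f ℓ : ℕ)) else 0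

/-- The Pauli-x operator acting on qubit `ℓ`. -/
def Xop {n : ℕ} (ℓ : Fin n) : Matrix (Fin n → Fin 2) (Fin n → Fin 2) ℂ :=
  fun f g => if f ℓ ≠ g ℓ ∧ ∀ m, m ≠ ℓ → f m = g m then 1 else 0

/-- The Pauli-y operator acting on qubit `ℓ`. -/
def Yop {n : ℕ} (ℓ : Fin n) : Matrix (Fin n → Fin 2) (Fin n → Fin 2) ℂ :=
  fun f g => if f ℓ ≠ g ℓ ∧ ∀ m, m ≠ ℓ → f m = g m then
    Complex.I * (-1 : ℂ) ^ ((f ℓ : ℕ) + 1) else 0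

/-! Each factor `u ℓ` of `K` is unitarily diagonalizable. Rescaling by a square root of its
determinant gives `w ∈ SU(2)`, for which `wᴴ = adjugate w = (tr w) • 1 - w`; hence
`w = (tr w / 2) • 1 + (w - wᴴ) / 2` is an affine function of the Hermitian matrix `i (w - wᴴ)`,
and the spectral theorem applies. Kronecker products are multiplicative, so diagonalizing each
factor as `u ℓ = v ℓ * d ℓ * (v ℓ)ᴴ` gives `K = K̄ * K_z * K̄ᴴ` with `K̄ = ⊗ v ℓ` and the diagonal
`K_z = ⊗ d ℓ`; conjugating `K * H * Kᴴ = -H` by `K̄` then gives the last claim. -/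

theorem Matrix.adjugate_fin_two_eq_trace_smul_one_sub {R : Type*} [CommRing R]
    (A : Matrix (Fin 2) (Fin 2) R) : A.adjugate = A.trace • 1 - A := by
  ext i j
  fin_cases i <;> fin_cases j <;> simp [adjugate_fin_two, trace_fin_two]

theorem Matrix.add_star_eq_trace_smul_one_of_mem_specialUnitaryGroup {R : Type*} [CommRing R]
    [StarRing R] {w : Matrix (Fin 2) (Fin 2) R} (hw : w ∈ specialUnitaryGroup (Fin 2) R) :
    w + star w = w.trace • 1 := by
  obtain ⟨hu, hdet⟩ := mem_specialUnitaryGroup_iff.mp hw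
  have hadj : w.adjugate = star w := by
    calc w.adjugate = w.adjugate * (w * star w) := by rw [Unitary.mul_star_self_of_mem hu, mul_one]
      _ = star w := by rw [← mul_assoc, adjugate_mul, hdet, one_smul, one_mul]
  rw [← hadj, adjugate_fin_two_eq_trace_smul_one_sub]
  abel

theorem Matrix.IsHermitian.exists_diagonal_conj_of_eq_smul_one_add_smul {𝕜 m : Type*} [RCLike 𝕜]
    [Fintype m] [DecidableEq m] {A u : Matrix m m 𝕜} (hA : A.IsHermitian) (a b : 𝕜)
    (hu : u = a • 1 + b • A) :
    ∃ v ∈ unitaryGroup m 𝕜, ∃ d : m → 𝕜, u = v * diagonal d * star v := by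
  set V := hA.eigenvectorUnitary
  set D : Matrix m m 𝕜 := diagonal (RCLike.ofReal ∘ hA.eigenvalues)
  have hA' : A = V * D * star (V : Matrix m m 𝕜) := hA.spectral_theorem
  refine ⟨V, V.2, fun i => a + b * hA.eigenvalues i, ?_⟩
  have hd : diagonal (fun i => a + b * hA.eigenvalues i) = a • 1 + b • D := by
    ext i j; by_cases hij : i = j <;> simp [D, hij]
  rw [hd, hu, hA']
  simp only [Matrix.mul_add, Matrix.add_mul, Matrix.mul_smul, Matrix.smul_mul, Matrix.mul_one,
    Unitary.mul_star_self_of_mem V.2]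

theorem Matrix.exists_diagonal_conj_of_mem_specialUnitaryGroup_fin_two
    {w : Matrix (Fin 2) (Fin 2) ℂ} (hw : w ∈ specialUnitaryGroup (Fin 2) ℂ) :
    ∃ v ∈ unitaryGroup (Fin 2) ℂ, ∃ d : Fin 2 → ℂ, w = v * diagonal d * star v := by
  have hA : (Complex.I • (w - star w)).IsHermitian := by
    simp [IsHermitian, ← star_eq_conjTranspose, star_sub, ← smul_neg]
  refine hA.exists_diagonal_conj_of_eq_smul_one_add_smul (w.trace / 2) (-Complex.I / 2) ?_
  rw [div_eq_mul_inv, mul_comm, ← smul_smul,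
    ← add_star_eq_trace_smul_one_of_mem_specialUnitaryGroup hw, smul_smul,
    show -Complex.I / 2 * Complex.I = 2⁻¹ by
      rw [div_mul_eq_mul_div, neg_mul, Complex.I_mul_I]; norm_num]
  module

theorem Complex.exists_mem_unitary_sq_eq {z : ℂ} (hz : z ∈ unitary ℂ) :
    ∃ s ∈ unitary ℂ, s ^ 2 = z := by
  obtain ⟨s, hs⟩ := IsAlgClosed.exists_pow_nat_eq z two_pos
  refine ⟨s, ?_, hs⟩
  have hnorm : ‖s‖ = 1 := by
    rw [← pow_eq_one_iff_of_nonneg (norm_nonneg s) two_ne_zero, ← norm_pow, hs,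
      CStarRing.norm_of_mem_unitary hz]
  rw [Unitary.mem_iff_star_mul_self, RCLike.star_def, RCLike.conj_mul, hnorm]
  norm_num

theorem Matrix.exists_diagonal_conj_of_mem_unitaryGroup_fin_two
    {u : Matrix (Fin 2) (Fin 2) ℂ} (hu : u ∈ unitaryGroup (Fin 2) ℂ) :
    ∃ v ∈ unitaryGroup (Fin 2) ℂ, ∃ d : Fin 2 → ℂ, u = v * diagonal d * star v := by
  obtain ⟨s, hs, hs2⟩ := Complex.exists_mem_unitary_sq_eq (det_of_mem_unitary hu)
  have hw : star s • u ∈ specialUnitaryGroup (Fin 2) ℂ := by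
    refine ⟨Unitary.smul_mem_of_mem (Unitary.star_mem hs) hu, ?_⟩
    show (star s • u).det = 1
    rw [det_smul, Fintype.card_fin, ← hs2, ← mul_pow, Unitary.star_mul_self_of_mem hs, one_pow]
  obtain ⟨v, hv, d, hvd⟩ := exists_diagonal_conj_of_mem_specialUnitaryGroup_fin_two hw
  refine ⟨v, hv, s • d, ?_⟩
  calc u = s • (star s • u) := by rw [smul_smul, Unitary.mul_star_self_of_mem hs, one_smul]
    _ = v * diagonal (s • d) * star v := by
      rw [hvd, diagonal_smul, Matrix.mul_smul, Matrix.smul_mul]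

section Unitary

variable {R : Type*} [Monoid R] [StarMul R] {U K z : R}

theorem Unitary.eq_star_mul_mul_of_eq_mul_mul_star (hU : U ∈ unitary R)
    (h : K = U * z * star U) : z = star U * K * U := by
  simp only [h, mul_assoc, Unitary.star_mul_self_of_mem hU, mul_one]
  rw [← mul_assoc, Unitary.star_mul_self_of_mem hU, one_mul]

theorem Unitary.mem_of_eq_mul_mul_star (hU : U ∈ unitary R) (hK : K ∈ unitary R)
    (h : K = U * z * star U) : z ∈ unitary R := by
  rw [eq_star_mul_mul_of_eq_mul_mul_star hU h]
  exact mul_mem (mul_mem (star_mem hU) hK) hU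

theorem Unitary.conj_star_conj_of_eq_mul_mul_star (hU : U ∈ unitary R)
    (h : K = U * z * star U) (H : R) :
    z * (star U * H * U) * star z = star U * (K * H * star K) * U := by
  simp only [eq_star_mul_mul_of_eq_mul_mul_star hU h, star_mul, star_star, mul_assoc,
    ← mul_assoc U (star U), Unitary.mul_star_self_of_mem hU, one_mul]

end Unitary

section PiKron

variable {ι κ μ ν R : Type*} [Fintype ι] [CommSemiring R]

def Matrix.piKron (u : ι → Matrix κ μ R) : Matrix (ι → κ) (ι → μ) R :=
  of fun f g => ∏ i, u i (f i) (g i)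

theorem Matrix.piKron_apply (u : ι → Matrix κ μ R) (f : ι → κ) (g : ι → μ) :
    piKron u f g = ∏ i, u i (f i) (g i) := rfl

theorem Matrix.piKron_mul [DecidableEq ι] [Fintype μ] (A : ι → Matrix κ μ R)
    (B : ι → Matrix μ ν R) : piKron A * piKron B = piKron fun i => A i * B i := by
  ext f g
  simp only [mul_apply, piKron_apply, Finset.prod_univ_sum, Fintype.piFinset_univ,
    Finset.prod_mul_distrib]

theorem Matrix.piKron_conjTranspose [StarRing R] (u : ι → Matrix κ μ R) :
    (piKron u)ᴴ = piKron fun i => (u i)ᴴ := by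
  ext f g
  simp [piKron_apply, star_prod]

theorem Matrix.piKron_diagonal [DecidableEq ι] [DecidableEq κ] (d : ι → κ → R) :
    piKron (fun i => diagonal (d i)) = diagonal fun f => ∏ i, d i (f i) := by
  ext f g
  rcases eq_or_ne f g with rfl | hfg
  · simp [piKron_apply]
  · obtain ⟨i, hi⟩ := Function.ne_iff.mp hfg
    rw [diagonal_apply_ne _ hfg, piKron_apply]
    exact Finset.prod_eq_zero (Finset.mem_univ i) (diagonal_apply_ne _ hi)

theorem Matrix.piKron_one [DecidableEq ι] [DecidableEq κ] :
    piKron (fun _ : ι => (1 : Matrix κ κ R)) = 1 := by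
  simpa using piKron_diagonal fun (_ : ι) (_ : κ) => (1 : R)

end PiKron

theorem Matrix.piKron_mem_unitaryGroup {ι κ R : Type*} [Fintype ι] [DecidableEq ι] [Fintype κ]
    [DecidableEq κ] [CommRing R] [StarRing R] {u : ι → Matrix κ κ R}
    (hu : ∀ i, u i ∈ unitaryGroup κ R) :
    piKron u ∈ unitaryGroup (ι → κ) R := by
  rw [mem_unitaryGroup_iff', star_eq_conjTranspose, piKron_conjTranspose, piKron_mul]
  simp_rw [← star_eq_conjTranspose, fun i => mem_unitaryGroup_iff'.mp (hu i)]
  exact piKron_one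

theorem isLocalUnitary_iff {n : ℕ} {K : Matrix (Fin n → Fin 2) (Fin n → Fin 2) ℂ} :
    IsLocalUnitary K ↔ ∃ u : Fin n → Matrix (Fin 2) (Fin 2) ℂ,
      (∀ ℓ, u ℓ ∈ unitaryGroup (Fin 2) ℂ) ∧ K = piKron u := by
  simp only [IsLocalUnitary, mem_unitaryGroup_iff', star_eq_conjTranspose, ← Matrix.ext_iff,
    piKron_apply]

theorem stmt16 (n : ℕ)
    (K H : Matrix (Fin n → Fin 2) (Fin n → Fin 2) ℂ)
    (hK : IsLocalUnitary K) (hinv : K * H * Kᴴ = -H) :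
    ∃ Kb Kz : Matrix (Fin n → Fin 2) (Fin n → Fin 2) ℂ,
      IsLocalUnitary Kb ∧ IsLocalUnitary Kz ∧
      (∃ d : (Fin n → Fin 2) → ℂ, Kz = Matrix.diagonal d) ∧
      K = Kb * Kz * Kbᴴ ∧
      Kz * (Kbᴴ * H * Kb) * Kzᴴ = -(Kbᴴ * H * Kb) := by
  obtain ⟨u, hu, rfl⟩ := isLocalUnitary_iff.mp hK
  choose v hv d hud using fun ℓ => exists_diagonal_conj_of_mem_unitaryGroup_fin_two (hu ℓ)
  have hconj : piKron u = piKron v * piKron (fun ℓ => diagonal (d ℓ)) * star (piKron v) := by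
    rw [star_eq_conjTranspose, piKron_conjTranspose, piKron_mul, piKron_mul]
    exact congrArg piKron (funext hud)
  refine ⟨piKron v, piKron fun ℓ => diagonal (d ℓ), isLocalUnitary_iff.mpr ⟨v, hv, rfl⟩,
    isLocalUnitary_iff.mpr ⟨_, fun ℓ => Unitary.mem_of_eq_mul_mul_star (hv ℓ) (hu ℓ) (hud ℓ), rfl⟩,
    ⟨_, piKron_diagonal d⟩, hconj, ?_⟩
  calc _ = star (piKron v) * (piKron u * H * star (piKron u)) * piKron v :=
        Unitary.conj_star_conj_of_eq_mul_mul_star (piKron_mem_unitaryGroup hv) hconj H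
    _ = _ := by
      simp only [star_eq_conjTranspose]
      rw [hinv, Matrix.mul_neg, Matrix.neg_mul]
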